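/- If a rotation of finite order N of the Euclidean plane fixes a 2-dimensional lattice (a rank-2 discrete subgroup spanning R^2) setwise, then N ∈ {1, 2, 3, 4, 6}. -/
import Mathlib

/-- **Barlow's Lemma / crystallographic restriction theorem.**
If the rotation of the Euclidean plane (identified with `ℂ`) through angle `2π/N`
maps a 2-dimensional lattice `L = ℤv₁ + ℤv₂` (with `v₁, v₂` linearly independent
over `ℝ`) into itself, then `N ∈ {1, 2, 3, 4, 6}`. -/
theorem crystallographic_restriction (N : ℕ) (hN : 0 < N) (v₁ v₂ : ℂ)
    (hind : LinearIndependent ℝ ![v₁, v₂])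
    (L : AddSubgroup ℂ) (hL : L = AddSubgroup.closure {v₁, v₂})
    (hrot : ∀ z ∈ L, Complex.exp (2 * Real.pi * Complex.I / N) * z ∈ L) :
    N ∈ ({1, 2, 3, 4, 6} : Set ℕ) := by
  classical
  set θ : ℝ := 2 * Real.pi / N with hθdef
  set ζ : ℂ := Complex.exp (2 * Real.pi * Complex.I / N) with hζdef
  have hNne : (N : ℂ) ≠ 0 := Nat.cast_ne_zero.mpr hN.ne'
  have hNR : (0:ℝ) < N := Nat.cast_pos.mpr hN
  have hζ' : ζ = Complex.cos θ + Complex.sin θ * Complex.I := by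
    rw [hζdef, ← Complex.exp_mul_I]
    congr 1
    rw [hθdef]
    push_cast
    field_simp
  have hζre : ζ = (Real.cos θ : ℂ) + (Real.sin θ : ℂ) * Complex.I := by
    rw [hζ', Complex.ofReal_cos, Complex.ofReal_sin]
  -- key quadratic identity: ζ² = 2cosθ · ζ - 1
  have hquad : ζ ^ 2 = 2 * (Real.cos θ : ℂ) * ζ - 1 := by
    rw [hζre]
    have h := Real.sin_sq_add_cos_sq θ
    have h' : (Real.sin θ : ℂ) ^ 2 + (Real.cos θ : ℂ) ^ 2 = 1 := by
      exact_mod_cast h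
    have hI : Complex.I ^ 2 = -1 := Complex.I_sq
    linear_combination (-(1:ℂ)) * h' + ((Real.sin θ:ℂ)^2) * hI
  -- uniqueness of real coefficients
  have huniq : ∀ α β γ δ : ℝ, (α : ℂ) * v₁ + (β : ℂ) * v₂ = (γ : ℂ) * v₁ + (δ : ℂ) * v₂ →
      α = γ ∧ β = δ := by
    intro α β γ δ h
    have h0 : (α - γ) • v₁ + (β - δ) • v₂ = 0 := by
      simp only [Complex.real_smul, Complex.ofReal_sub]
      linear_combination h
    obtain ⟨h1, h2⟩ := LinearIndependent.pair_iff.mp hind _ _ h0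
    constructor <;> linarith
  have hv₁ : v₁ ∈ L := by
    rw [hL]; exact AddSubgroup.subset_closure (by simp)
  have hv₂ : v₂ ∈ L := by
    rw [hL]; exact AddSubgroup.subset_closure (by simp)
  -- integer coefficients
  obtain ⟨a, b, hab⟩ := (AddSubgroup.mem_closure_pair).mp (hL ▸ hrot v₁ hv₁)
  obtain ⟨c, d, hcd⟩ := (AddSubgroup.mem_closure_pair).mp (hL ▸ hrot v₂ hv₂)
  have hab' : ζ * v₁ = (a : ℂ) * v₁ + (b : ℂ) * v₂ := by
    rw [← hab]; simp [zsmul_eq_mul]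
  have hcd' : ζ * v₂ = (c : ℂ) * v₁ + (d : ℂ) * v₂ := by
    rw [← hcd]; simp [zsmul_eq_mul]
  -- there is an integer k with (k : ℝ) = 2 cos θ
  obtain ⟨k, hk⟩ : ∃ k : ℤ, (k : ℝ) = 2 * Real.cos θ := by
    by_cases hb : b = 0
    · -- then ζ v₁ = a v₁, so ζ = a, cos θ = a
      have hv₁ne : v₁ ≠ 0 := by
        intro h0
        have := LinearIndependent.pair_iff.mp hind 1 0 (by simp [h0])
        simp at this
      have hza : ζ = (a : ℂ) := by
        have : ζ * v₁ = (a : ℂ) * v₁ := by rw [hab', hb]; push_cast; ring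
        exact mul_right_cancel₀ hv₁ne this
      refine ⟨2 * a, ?_⟩
      have : (Real.cos θ : ℂ) = (a : ℂ) := by
        have h2 := hζre
        rw [hza] at h2
        have := congrArg Complex.re h2
        simp at this
        exact_mod_cast congrArg (Complex.ofReal ·) this.symm
      have : Real.cos θ = (a : ℝ) := by exact_mod_cast this
      push_cast
      linarith
    · -- compare coefficients of v₂ in ζ² v₁
      have hquadC : ζ ^ 2 = 2 * Complex.cos (θ:ℂ) * ζ - 1 := by
        rw [hquad, Complex.ofReal_cos]
      have key := huniq ((a:ℝ)*a + b*c) ((a:ℝ)*b + b*d)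
          (2 * Real.cos θ * a - 1) (2 * Real.cos θ * b) (by
        push_cast
        linear_combination (-(ζ + (a:ℂ))) * hab' - (b:ℂ) * hcd' + v₁ * hquadC
          + 2 * (Complex.cos (θ:ℂ)) * hab')
      have h2 : (a:ℝ)*b + b*d = 2 * Real.cos θ * b := key.2
      refine ⟨a + d, ?_⟩
      have hbR : (b : ℝ) ≠ 0 := Int.cast_ne_zero.mpr hb
      have := mul_right_cancel₀ hbR (by linarith : ((a:ℝ) + d) * b = (2 * Real.cos θ) * b)
      push_cast
      linarith
  -- now 2 cos θ is an integer; rule out N = 5 and N ≥ 7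
  by_contra hmem
  simp only [Set.mem_insert_iff, Set.mem_singleton_iff] at hmem
  push_neg at hmem
  have hN57 : N = 5 ∨ 7 ≤ N := by omega
  have hπ := Real.pi_pos
  have hθpos : 0 < θ := by
    rw [hθdef]; positivity
  rcases hN57 with h5 | h7
  · -- π/3 < θ < π/2, so 0 < 2cosθ < 1
    have hθlt : θ < Real.pi / 2 := by
      rw [hθdef, h5]; push_cast; linarith
    have hθgt : Real.pi / 3 < θ := by
      rw [hθdef, h5]; push_cast; linarith
    have hc1 : Real.cos θ < Real.cos (Real.pi / 3) :=
      Real.cos_lt_cos_of_nonneg_of_le_pi (by positivity) (by linarith) hθgt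
    rw [Real.cos_pi_div_three] at hc1
    have hc2 : 0 < Real.cos θ :=
      Real.cos_pos_of_mem_Ioo ⟨by linarith, hθlt⟩
    have : (0:ℝ) < (k:ℝ) ∧ (k:ℝ) < 1 := by constructor <;> (rw [hk]; linarith)
    have h0 : 0 < k := by exact_mod_cast this.1
    have h1 : k < 1 := by exact_mod_cast this.2
    omega
  · -- 0 < θ < π/3, so 1 < 2cosθ < 2
    have hθlt : θ < Real.pi / 3 := by
      rw [hθdef]
      rw [div_lt_div_iff₀ hNR (by norm_num)]
      have : (7:ℝ) ≤ N := by exact_mod_cast h7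
      nlinarith
    have hc1 : Real.cos (Real.pi / 3) < Real.cos θ :=
      Real.cos_lt_cos_of_nonneg_of_le_pi (by positivity) (by linarith) hθlt
    rw [Real.cos_pi_div_three] at hc1
    have hc2 : Real.cos θ < 1 := by
      have := Real.cos_lt_cos_of_nonneg_of_le_pi (le_refl 0) (by linarith : θ ≤ Real.pi) hθpos
      rwa [Real.cos_zero] at this
    have : (1:ℝ) < (k:ℝ) ∧ (k:ℝ) < 2 := by constructor <;> (rw [hk]; linarith)
    have h0 : 1 < k := by exact_mod_cast this.1
    have h1 : k < 2 := by exact_mod_cast this.2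
    omega
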